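/- arXiv:2512.16242 — 5 statements merged into one kernel-verified Lean document; each statement's English description precedes it below -/
import Mathlib

section
/- If a tripartite behavior P(a1,a2,a3|x1,x2,x3) with binary inputs and outputs admits a local hidden-variable decomposition, and satisfies the four zero conditions P(+,+,+|A1,A0,A0)=0, P(+,+,+|A0,A1,A0)=0, P(+,+,+|A0,A0,A1)=0, P(-,-,-|A1,A1,A1)=0, then P(+,+,+|A0,A0,A0)=0. -/
/-- Tripartite Hardy paradox: a local behavior satisfying the four Hardy zero
conditions must also have vanishing Hardy success probability.
Outcomes are encoded by `Bool` with `true` standing for `+1` and `false` for `-1`;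
settings are elements of `Fin 2`. -/
theorem tripartite_hardy_local_implies_zero
    {Λ : Type*} [Fintype Λ]
    (ν : Λ → ℝ) (hν : ∀ l, 0 ≤ ν l) (hνsum : ∑ l, ν l = 1)
    (P1 P2 P3 : Bool → Fin 2 → Λ → ℝ)
    (hP1 : ∀ a x l, 0 ≤ P1 a x l) (hP2 : ∀ a x l, 0 ≤ P2 a x l)
    (hP3 : ∀ a x l, 0 ≤ P3 a x l)
    (hP1sum : ∀ x l, P1 true x l + P1 false x l = 1)
    (hP2sum : ∀ x l, P2 true x l + P2 false x l = 1)
    (hP3sum : ∀ x l, P3 true x l + P3 false x l = 1)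
    (P : Bool → Bool → Bool → Fin 2 → Fin 2 → Fin 2 → ℝ)
    (hP : ∀ a1 a2 a3 x1 x2 x3,
      P a1 a2 a3 x1 x2 x3 = ∑ l, ν l * (P1 a1 x1 l * P2 a2 x2 l * P3 a3 x3 l))
    (h1 : P true true true 1 0 0 = 0)
    (h2 : P true true true 0 1 0 = 0)
    (h3 : P true true true 0 0 1 = 0)
    (h4 : P false false false 1 1 1 = 0) :
    P true true true 0 0 0 = 0 := by
  have key : ∀ (a1 a2 a3 : Bool) (x1 x2 x3 : Fin 2),
      P a1 a2 a3 x1 x2 x3 = 0 →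
      ∀ l, ν l * (P1 a1 x1 l * P2 a2 x2 l * P3 a3 x3 l) = 0 := by
    intro a1 a2 a3 x1 x2 x3 h l
    rw [hP] at h
    have := (Finset.sum_eq_zero_iff_of_nonneg (fun l _ =>
      mul_nonneg (hν l) (mul_nonneg (mul_nonneg (hP1 _ _ _) (hP2 _ _ _)) (hP3 _ _ _)))).mp h
    exact this l (Finset.mem_univ l)
  rw [hP]
  apply Finset.sum_eq_zero
  intro l _
  by_contra hne
  have hνl : 0 < ν l := lt_of_le_of_ne (hν l) (by
    intro h; exact hne (by rw [← h]; ring))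
  have h1' : 0 < P1 true 0 l := by
    rcases lt_or_eq_of_le (hP1 true 0 l) with h | h
    · exact h
    · exact absurd (by rw [← h]; ring) hne
  have h2' : 0 < P2 true 0 l := by
    rcases lt_or_eq_of_le (hP2 true 0 l) with h | h
    · exact h
    · exact absurd (by rw [← h]; ring) hne
  have h3' : 0 < P3 true 0 l := by
    rcases lt_or_eq_of_le (hP3 true 0 l) with h | h
    · exact h
    · exact absurd (by rw [← h]; ring) hne
  have e1 := key true true true 1 0 0 h1 l
  have e2 := key true true true 0 1 0 h2 l
  have e3 := key true true true 0 0 1 h3 l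
  have e4 := key false false false 1 1 1 h4 l
  -- From e1: P1 true 1 l = 0
  have f1 : P1 true 1 l = 0 := by
    by_contra hf
    have : 0 < P1 true 1 l := lt_of_le_of_ne (hP1 _ _ _) (Ne.symm hf)
    exact absurd e1 (ne_of_gt (mul_pos hνl (mul_pos (mul_pos this h2') h3')))
  have f2 : P2 true 1 l = 0 := by
    by_contra hf
    have : 0 < P2 true 1 l := lt_of_le_of_ne (hP2 _ _ _) (Ne.symm hf)
    exact absurd e2 (ne_of_gt (mul_pos hνl (mul_pos (mul_pos h1' this) h3')))
  have f3 : P3 true 1 l = 0 := by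
    by_contra hf
    have : 0 < P3 true 1 l := lt_of_le_of_ne (hP3 _ _ _) (Ne.symm hf)
    exact absurd e3 (ne_of_gt (mul_pos hνl (mul_pos (mul_pos h1' h2') this)))
  have g1 : P1 false 1 l = 1 := by have := hP1sum 1 l; linarith
  have g2 : P2 false 1 l = 1 := by have := hP2sum 1 l; linarith
  have g3 : P3 false 1 l = 1 := by have := hP3sum 1 l; linarith
  rw [g1, g2, g3] at e4
  simp at e4
  exact hne (by rw [e4]; ring)
end

section
/- For the N-party generalization: if an N-partite behavior with binary inputs and outputs admits a local hidden-variable decomposition and satisfies P(+,...,+| one party measures setting 1, all others measure setting 0) = 0 for each of the N choices of the deviating party, and P(-,...,-| all parties measure setting 1) = 0, then P(+,...,+| all parties measure setting 0) = 0. -/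
/-- N-party Hardy paradox: a local N-partite behavior satisfying the N+1 Hardy
zero conditions must have vanishing Hardy success probability.
Outcomes are encoded by `Bool` with `true` = `+1`, `false` = `-1`;
settings are elements of `Fin 2`. -/
theorem npartite_hardy_local_implies_zero
    (N : ℕ) (hN : 0 < N)
    {Λ : Type*} [Fintype Λ]
    (ν : Λ → ℝ) (hν : ∀ l, 0 ≤ ν l) (hνsum : ∑ l, ν l = 1)
    (Pi : Fin N → Bool → Fin 2 → Λ → ℝ)
    (hPi : ∀ i a x l, 0 ≤ Pi i a x l)
    (hPisum : ∀ i x l, Pi i true x l + Pi i false x l = 1)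
    (P : (Fin N → Bool) → (Fin N → Fin 2) → ℝ)
    (hP : ∀ a x, P a x = ∑ l, ν l * ∏ i, Pi i (a i) (x i) l)
    (hzero : ∀ j : Fin N,
      P (fun _ => true) (fun i => if i = j then 1 else 0) = 0)
    (hlast : P (fun _ => false) (fun _ => 1) = 0) :
    P (fun _ => true) (fun _ => 0) = 0 := by
  have term_nonneg : ∀ (a : Fin N → Bool) (x : Fin N → Fin 2) (l : Λ),
      0 ≤ ν l * ∏ i, Pi i (a i) (x i) l := fun a x l =>
    mul_nonneg (hν l) (Finset.prod_nonneg fun i _ => hPi i (a i) (x i) l)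
  have key : ∀ (a : Fin N → Bool) (x : Fin N → Fin 2),
      P a x = 0 → ∀ l, ν l * ∏ i, Pi i (a i) (x i) l = 0 := by
    intro a x h l
    rw [hP] at h
    exact (Finset.sum_eq_zero_iff_of_nonneg
      (fun l _ => term_nonneg a x l)).mp h l (Finset.mem_univ l)
  rw [hP]
  apply Finset.sum_eq_zero
  intro l _
  by_contra hne
  have hpos : 0 < ν l * ∏ i, Pi i true 0 l :=
    lt_of_le_of_ne (term_nonneg (fun _ => true) (fun _ => 0) l) (Ne.symm hne)
  obtain ⟨hνl, hprod⟩ : 0 < ν l ∧ 0 < ∏ i, Pi i true 0 l := by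
    rcases mul_pos_iff.mp hpos with h | ⟨h, _⟩
    · exact h
    · exact absurd h (not_lt.mpr (hν l))
  have hfac : ∀ i : Fin N, 0 < Pi i true 0 l := by
    intro i
    rcases lt_or_eq_of_le (hPi i true 0 l) with h | h
    · exact h
    · exact absurd (Finset.prod_eq_zero (Finset.mem_univ i) h.symm) (ne_of_gt hprod)
  -- each party's setting-1 'true' prob vanishes
  have hj1 : ∀ j : Fin N, Pi j true 1 l = 0 := by
    intro j
    have h0 := key (fun _ => true) (fun i => if i = j then 1 else 0) (hzero j) l
    have hprod0 : ∏ i, Pi i true (if i = j then 1 else 0) l = 0 := by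
      rcases mul_eq_zero.mp h0 with h | h
      · exact absurd h (ne_of_gt hνl)
      · exact h
    obtain ⟨i, _, hi⟩ := Finset.prod_eq_zero_iff.mp hprod0
    by_cases hij : i = j
    · subst hij; simpa using hi
    · rw [if_neg hij] at hi
      exact absurd hi (ne_of_gt (hfac i))
  -- hence setting-1 'false' prob is 1 for each party
  have hj2 : ∀ j : Fin N, Pi j false 1 l = 1 := by
    intro j
    have := hPisum j 1 l
    rw [hj1 j] at this
    linarith
  have hlastl := key (fun _ => false) (fun _ => 1) hlast l
  have : (∏ i : Fin N, Pi i false 1 l) = 1 :=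
    Finset.prod_eq_one fun i _ => hj2 i
  rw [this, mul_one] at hlastl
  exact absurd hlastl (ne_of_gt hνl)
end

section
/- Consider the GHZ state |GHZ> = (|000> + |111>)/sqrt(2) in (C^2)^{⊗3}, and for each party the observables A0 = [[0, e^{-iπ/6}],[e^{iπ/6}, 0]] and A1 = [[0, e^{-i2π/3}],[e^{i2π/3}, 0]]. Then the Bell operator W = (1/2)(-A0⊗A1⊗A0 - A1⊗A0⊗A0 - A0⊗A0⊗A1 + A1⊗A1⊗A1) satisfies W|GHZ> = 2|GHZ>. -/
open Kronecker Matrix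

/-- The observable `A0 = [[0, e^{-iπ/6}], [e^{iπ/6}, 0]]`. -/
noncomputable def obsA0 : Matrix (Fin 2) (Fin 2) ℂ :=
  !![0, Complex.exp (-(Complex.I * (Real.pi / 6)));
     Complex.exp (Complex.I * (Real.pi / 6)), 0]

/-- The observable `A1 = [[0, e^{-i2π/3}], [e^{i2π/3}, 0]]`. -/
noncomputable def obsA1 : Matrix (Fin 2) (Fin 2) ℂ :=
  !![0, Complex.exp (-(Complex.I * (2 * Real.pi / 3)));
     Complex.exp (Complex.I * (2 * Real.pi / 3)), 0]

/-- The GHZ state `(|000⟩ + |111⟩)/√2` as a vector on `(Fin 2 × Fin 2) × Fin 2`. -/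
noncomputable def ghzVec : ((Fin 2 × Fin 2) × Fin 2) → ℂ :=
  fun p => if p = ((0, 0), 0) ∨ p = ((1, 1), 1) then ((1 / Real.sqrt 2 : ℝ) : ℂ) else 0

/-- The Bell operator `W = (1/2)(-A0⊗A1⊗A0 - A1⊗A0⊗A0 - A0⊗A0⊗A1 + A1⊗A1⊗A1)`. -/
noncomputable def bellW : Matrix ((Fin 2 × Fin 2) × Fin 2) ((Fin 2 × Fin 2) × Fin 2) ℂ :=
  ((1 : ℂ) / 2) • (-(obsA0 ⊗ₖ obsA1 ⊗ₖ obsA0) - obsA1 ⊗ₖ obsA0 ⊗ₖ obsA0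
      - obsA0 ⊗ₖ obsA0 ⊗ₖ obsA1 + obsA1 ⊗ₖ obsA1 ⊗ₖ obsA1)

set_option maxHeartbeats 2000000 in
/-- The GHZ state is an eigenvector of the Bell operator `W` with eigenvalue `2`. -/
theorem bellW_mulVec_ghz : bellW.mulVec ghzVec = (2 : ℂ) • ghzVec := by
  have h1 : Complex.exp (Complex.I * (Real.pi / 6)) ^ 2
      * Complex.exp (Complex.I * (2 * Real.pi / 3)) = -1 := by
    rw [← Complex.exp_nat_mul, ← Complex.exp_add]
    have : (2 : ℕ) * (Complex.I * (Real.pi / 6)) + Complex.I * (2 * Real.pi / 3)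
        = Real.pi * Complex.I := by push_cast; ring
    rw [this, Complex.exp_pi_mul_I]
  have h1' : Complex.exp (-(Complex.I * (Real.pi / 6))) ^ 2
      * Complex.exp (-(Complex.I * (2 * Real.pi / 3))) = -1 := by
    rw [← Complex.exp_nat_mul, ← Complex.exp_add]
    have : (2 : ℕ) * -(Complex.I * (Real.pi / 6)) + -(Complex.I * (2 * Real.pi / 3))
        = -(Real.pi * Complex.I) := by push_cast; ring
    rw [this, Complex.exp_neg, Complex.exp_pi_mul_I]
    norm_num
  have h2 : Complex.exp (Complex.I * (2 * Real.pi / 3)) ^ 3 = 1 := by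
    rw [← Complex.exp_nat_mul]
    have : (3 : ℕ) * (Complex.I * (2 * Real.pi / 3)) = 2 * Real.pi * Complex.I := by
      push_cast; ring
    rw [this, Complex.exp_two_pi_mul_I]
  have h2' : Complex.exp (-(Complex.I * (2 * Real.pi / 3))) ^ 3 = 1 := by
    rw [← Complex.exp_nat_mul]
    have : (3 : ℕ) * -(Complex.I * (2 * Real.pi / 3)) = -(2 * Real.pi * Complex.I) := by
      push_cast; ring
    rw [this, Complex.exp_neg, Complex.exp_two_pi_mul_I]
    norm_num
  ring_nf at h1 h1' h2 h2'
  funext x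
  obtain ⟨⟨a, b⟩, c⟩ := x
  set q : ℂ := (((1 : ℝ) / Real.sqrt 2 : ℝ) : ℂ) with hq
  fin_cases a <;> fin_cases b <;> fin_cases c <;>
    simp [bellW, mulVec, dotProduct, Fintype.sum_prod_type, Fin.sum_univ_two,
      obsA0, obsA1, ghzVec, ← hq] <;>
    ring_nf
  · linear_combination (-3 / 2 : ℂ) * h1' + (1 / 2 : ℂ) * h2'
  · linear_combination (-3 / 2 : ℂ) * h1 + (1 / 2 : ℂ) * h2
end

section
/- Let A0 = [[0, e^{-iπ/6}],[e^{iπ/6}, 0]] and A1 = [[0, e^{-i2π/3}],[e^{i2π/3}, 0]]. Then the operator norm of the Bell operator W = (1/2)(-A0⊗A1⊗A0 - A1⊗A0⊗A0 - A0⊗A0⊗A1 + A1⊗A1⊗A1) equals 2; in particular 2 is the maximal eigenvalue of W. -/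
set_option synthInstance.maxHeartbeats 400000
set_option maxHeartbeats 1000000


open Kronecker Matrix

noncomputable def cRoot : ℂ := Complex.exp (Complex.I * (Real.pi / 6))

lemma cRoot_ne : cRoot ≠ 0 := Complex.exp_ne_zero _

lemma cRoot_pow_six : cRoot ^ 6 = -1 := by
  rw [cRoot, ← Complex.exp_nat_mul]
  rw [show ((6:ℕ) : ℂ) * (Complex.I * (Real.pi / 6)) = Real.pi * Complex.I by push_cast; ring]
  exact Complex.exp_pi_mul_I

lemma obsA0_eq : obsA0 = !![0, cRoot⁻¹; cRoot, 0] := by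
  rw [obsA0, cRoot, Complex.exp_neg]

lemma obsA1_eq : obsA1 = !![0, (cRoot ^ 4)⁻¹; cRoot ^ 4, 0] := by
  have h : Complex.exp (Complex.I * (2 * Real.pi / 3)) = cRoot ^ 4 := by
    rw [cRoot, ← Complex.exp_nat_mul]
    rw [show ((4:ℕ) : ℂ) * (Complex.I * (Real.pi / 6)) = Complex.I * (2 * Real.pi / 3) by
      push_cast; ring]
  rw [obsA1, Complex.exp_neg, h]

lemma bellW_apply (i j k i' j' k' : Fin 2) :
    bellW ((i,j),k) ((i',j'),k') =
      ((1:ℂ)/2) * (-(obsA0 i i' * obsA1 j j' * obsA0 k k')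
        - obsA1 i i' * obsA0 j j' * obsA0 k k'
        - obsA0 i i' * obsA0 j j' * obsA1 k k'
        + obsA1 i i' * obsA1 j j' * obsA1 k k') := by
  simp only [bellW, Matrix.smul_apply, Matrix.add_apply, Matrix.sub_apply, Matrix.neg_apply,
    Matrix.kroneckerMap_apply, smul_eq_mul]



lemma cRoot_inv : cRoot⁻¹ = -cRoot ^ 5 :=
  inv_eq_of_mul_eq_one_right (by linear_combination -cRoot_pow_six)

lemma cRoot_pow_four_inv : (cRoot ^ 4)⁻¹ = -cRoot ^ 2 :=
  inv_eq_of_mul_eq_one_right (by linear_combination -cRoot_pow_six)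

def wMat : Matrix ((Fin 2 × Fin 2) × Fin 2) ((Fin 2 × Fin 2) × Fin 2) ℂ :=
  Matrix.of fun p q =>
    if (p = ((0,0),0) ∧ q = ((1,1),1)) ∨ (p = ((1,1),1) ∧ q = ((0,0),0)) then 2 else 0

set_option maxHeartbeats 2000000 in
lemma bellW_eq : bellW = wMat := by
  have h6 := cRoot_pow_six
  ext ⟨⟨i,j⟩,k⟩ ⟨⟨i',j'⟩,k'⟩
  rw [bellW_apply]
  fin_cases i <;> fin_cases j <;> fin_cases k <;> fin_cases i' <;> fin_cases j' <;> fin_cases k' <;>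
    simp only [obsA0_eq, obsA1_eq, cRoot_inv, cRoot_pow_four_inv, wMat, Matrix.of_apply,
      Matrix.cons_val', Matrix.cons_val_zero, Matrix.cons_val_one, Matrix.head_cons,
      Matrix.empty_val', Matrix.cons_val_fin_one, Matrix.head_fin_const] <;>
  norm_num <;>
  first
    | linear_combination ((3:ℂ)/2 * cRoot^6 - 2) * h6
    | linear_combination ((1:ℂ)/2 * cRoot^6 - 2) * h6
    | linear_combination (-(1:ℂ)/2 * cRoot^8) * h6
    | linear_combination ((1:ℂ)/2 * cRoot^4) * h6
    | linear_combination (cRoot^4) * h6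
    | linear_combination (-cRoot^8) * h6

abbrev x0 : (Fin 2 × Fin 2) × Fin 2 := ((0,0),0)
abbrev x1 : (Fin 2 × Fin 2) × Fin 2 := ((1,1),1)

lemma x0_ne_x1 : x0 ≠ x1 := by decide

noncomputable def sV (p : (Fin 2 × Fin 2) × Fin 2) : ((Fin 2 × Fin 2) × Fin 2) → ℂ :=
  Pi.single p 1

lemma sV_dot_self (p) : sV p ⬝ᵥ sV p = 1 := by
  simp [sV, single_dotProduct]

lemma sV_dot_ne {p q} (h : p ≠ q) : sV p ⬝ᵥ sV q = 0 := by
  simp [sV, single_dotProduct, Pi.single_apply, h]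

lemma mul_vecMulVec (a b c d : ((Fin 2 × Fin 2) × Fin 2) → ℂ) :
    vecMulVec a b * vecMulVec c d = (b ⬝ᵥ c) • vecMulVec a d := by
  ext i j
  simp only [Matrix.mul_apply, Matrix.vecMulVec_apply, Matrix.smul_apply, dotProduct,
    smul_eq_mul, Finset.sum_mul, Finset.mul_sum]
  exact Finset.sum_congr rfl fun k _ => by ring

lemma wMat_eq2 : wMat = (2:ℂ) • (vecMulVec (sV x0) (sV x1) + vecMulVec (sV x1) (sV x0)) := by
  ext p q
  simp only [wMat, Matrix.of_apply, Matrix.smul_apply, Matrix.add_apply,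
    Matrix.vecMulVec_apply, sV, Pi.single_apply, smul_eq_mul]
  by_cases h1 : p = x0 <;> by_cases h2 : q = x1 <;> by_cases h3 : p = x1 <;>
    by_cases h4 : q = x0 <;>
    simp only [h1, h2, h3, h4, if_pos, if_neg, x0, x1] <;>
    simp_all (config := { decide := true }) [x0, x1]

lemma wMat_cube : wMat * wMat * wMat = (4:ℂ) • wMat := by
  rw [wMat_eq2]
  simp only [smul_mul_assoc, mul_smul_comm, smul_smul, add_mul, mul_add, mul_vecMulVec,
    sV_dot_self, sV_dot_ne x0_ne_x1, sV_dot_ne x0_ne_x1.symm, one_smul, zero_smul,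
    add_zero, zero_add, smul_add]
  simp only [zero_mul, mul_zero, smul_zero, zero_add, add_zero, zero_smul]
  module

lemma wMat_herm : wMatᴴ = wMat := by
  ext p q
  simp only [Matrix.conjTranspose_apply, wMat, Matrix.of_apply]
  by_cases h : (q = ((0,0),0) ∧ p = ((1,1),1)) ∨ (q = ((1,1),1) ∧ p = ((0,0),0))
  · rw [if_pos h, if_pos (Or.symm (h.imp And.symm And.symm))]; norm_num
  · rw [if_neg h, if_neg (fun h' => h (Or.symm (h'.imp And.symm And.symm)))]; norm_num

noncomputable def vEig : ((Fin 2 × Fin 2) × Fin 2) → ℂ :=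
  fun p => if p = ((0,0),0) ∨ p = ((1,1),1) then 1 else 0

lemma vEig_ne : vEig ≠ 0 := by
  intro h
  have := congrFun h (((0:Fin 2),(0:Fin 2)),(0:Fin 2))
  simp [vEig] at this

lemma wMat_mulVec : wMat.mulVec vEig = (2:ℂ) • vEig := by
  ext ⟨⟨i,j⟩,k⟩
  simp only [Matrix.mulVec, dotProduct, wMat, vEig, Matrix.of_apply,
    Fintype.sum_prod_type, Fin.sum_univ_two, Pi.smul_apply, smul_eq_mul]
  fin_cases i <;> fin_cases j <;> fin_cases k <;> norm_num

lemma bellW_cube : bellW * bellW * bellW = (4:ℂ) • bellW := by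
  rw [bellW_eq]; exact wMat_cube

lemma bellW_mulVec : bellW.mulVec vEig = (2:ℂ) • vEig := by
  rw [bellW_eq]; exact wMat_mulVec

lemma bellW_herm : bellWᴴ = bellW := by rw [bellW_eq]; exact wMat_herm

open scoped Matrix.Norms.L2Operator in
lemma bellW_l2norm : ‖bellW‖ = 2 := by
  have hnormTT : ‖bellW * bellW‖ = ‖bellW‖ * ‖bellW‖ := by
    calc ‖bellW * bellW‖ = ‖bellWᴴ * bellW‖ := by rw [bellW_herm]
    _ = ‖bellW‖ * ‖bellW‖ := Matrix.l2_opNorm_conjTranspose_mul_self bellW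
  have hTT4 : (bellW * bellW) * (bellW * bellW) = (4:ℂ) • (bellW * bellW) := by
    calc (bellW * bellW) * (bellW * bellW) = (bellW * bellW * bellW) * bellW := by noncomm_ring
    _ = (4:ℂ) • (bellW * bellW) := by rw [bellW_cube, smul_mul_assoc]
  have hstarTT : (bellW * bellW)ᴴ = bellW * bellW := by
    rw [Matrix.conjTranspose_mul, bellW_herm]
  have hkey : (‖bellW‖ * ‖bellW‖) * (‖bellW‖ * ‖bellW‖) = 4 * (‖bellW‖ * ‖bellW‖) := by
    calc (‖bellW‖ * ‖bellW‖) * (‖bellW‖ * ‖bellW‖) = ‖bellW * bellW‖ * ‖bellW * bellW‖ := by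
          rw [hnormTT]
    _ = ‖(bellW * bellW)ᴴ * (bellW * bellW)‖ :=
          (Matrix.l2_opNorm_conjTranspose_mul_self _).symm
    _ = ‖(4:ℂ) • (bellW * bellW)‖ := by rw [hstarTT, hTT4]
    _ = 4 * (‖bellW‖ * ‖bellW‖) := by
          rw [norm_smul, hnormTT]
          norm_num
  set v' : EuclideanSpace ℂ ((Fin 2 × Fin 2) × Fin 2) := (WithLp.equiv 2 _).symm vEig with hv'
  have hv'ne : v' ≠ 0 := by
    intro h
    apply vEig_ne
    have := congrArg (WithLp.equiv 2 _) h
    simpa [hv'] using this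
  have hge : 2 ≤ ‖bellW‖ := by
    have h1 : ‖(EuclideanSpace.equiv _ ℂ).symm <| bellW *ᵥ v'‖ ≤ ‖bellW‖ * ‖v'‖ :=
      Matrix.l2_opNorm_mulVec bellW v'
    have h2 : (EuclideanSpace.equiv ((Fin 2 × Fin 2) × Fin 2) ℂ).symm (bellW *ᵥ v') =
        (2:ℂ) • v' := by
      show (WithLp.equiv 2 _).symm (bellW *ᵥ v') = (2:ℂ) • v'
      have : bellW *ᵥ v' = (2:ℂ) • vEig := bellW_mulVec
      rw [this, hv']
      rfl
    rw [h2, norm_smul] at h1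
    have h3 : ‖(2:ℂ)‖ = 2 := by norm_num
    rw [h3] at h1
    have h4 : 0 < ‖v'‖ := norm_pos_iff.mpr hv'ne
    nlinarith
  have h4 : (‖bellW‖ - 2) * (‖bellW‖ + 2) * (‖bellW‖ * ‖bellW‖) = 0 := by nlinarith
  rcases mul_eq_zero.mp h4 with h5 | h5
  · rcases mul_eq_zero.mp h5 with h6 | h6
    · linarith [sub_eq_zero.mp h6]
    · linarith
  · nlinarith

/-- The operator norm of the Bell operator `W` equals `2`; in particular `2` is an
eigenvalue of `W` and every eigenvalue has modulus at most `2`. -/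
theorem bellW_opNorm_eq_two :
    ‖Matrix.toEuclideanCLM (𝕜 := ℂ) bellW‖ = 2 ∧
    Module.End.HasEigenvalue (Matrix.toLin' bellW) 2 ∧
    ∀ μ : ℂ, Module.End.HasEigenvalue (Matrix.toLin' bellW) μ → ‖μ‖ ≤ 2 := by
  have hnorm : ‖Matrix.toEuclideanCLM (𝕜 := ℂ) bellW‖ = 2 := bellW_l2norm
  refine ⟨hnorm, ?_, ?_⟩
  · exact Module.End.hasEigenvalue_of_hasEigenvector
      ⟨Module.End.mem_eigenspace_iff.mpr (by rw [Matrix.toLin'_apply, bellW_mulVec]), vEig_ne⟩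
  · intro μ hμ
    obtain ⟨v, hv⟩ := hμ.exists_hasEigenvector
    have hv1 : Matrix.toLin' bellW v = μ • v := hv.apply_eq_smul
    have e1 : Matrix.toLin' (bellW * bellW * bellW) v = (μ^3) • v := by
      rw [Matrix.toLin'_mul, Matrix.toLin'_mul, LinearMap.comp_apply, LinearMap.comp_apply]
      simp only [hv1, LinearMap.map_smul_of_tower, smul_smul]
      ring_nf
    have e2 : Matrix.toLin' (bellW * bellW * bellW) v = (4*μ) • v := by
      rw [bellW_cube, _root_.map_smul, LinearMap.smul_apply, hv1, smul_smul]
    have e3 : (μ^3 - 4*μ) • v = 0 := by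
      rw [sub_smul, e1.symm.trans e2, sub_self]
    have hμ3 : μ^3 - 4*μ = 0 := by
      rcases smul_eq_zero.mp e3 with h | h
      · exact h
      · exact absurd h hv.right
    have hfac : μ * ((μ - 2) * (μ + 2)) = 0 := by linear_combination hμ3
    rcases mul_eq_zero.mp hfac with h | h
    · simp [h]
    · rcases mul_eq_zero.mp h with h | h
      · rw [sub_eq_zero.mp h]; norm_num
      · rw [eq_neg_of_add_eq_zero_left h]; norm_num
end

section
/- In the bipartite Hardy setting: if a behavior P(a1,a2|x1,x2) (binary inputs/outputs) admits a local hidden-variable model and satisfies P(+,+|A1,A0) = P(+,+|A0,A1) = P(-,-|A1,A1) = 0, then P(+,+|A0,A0) = 0. -/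
/-- Bipartite Hardy paradox: a local behavior satisfying the three Hardy zero
conditions must have vanishing Hardy success probability.
Outcomes: `true` = `+1`, `false` = `-1`; settings in `Fin 2`. -/
theorem bipartite_hardy_local_implies_zero
    {Λ : Type*} [Fintype Λ]
    (ν : Λ → ℝ) (hν : ∀ l, 0 ≤ ν l) (hνsum : ∑ l, ν l = 1)
    (P1 P2 : Bool → Fin 2 → Λ → ℝ)
    (hP1 : ∀ a x l, 0 ≤ P1 a x l) (hP2 : ∀ a x l, 0 ≤ P2 a x l)
    (hP1sum : ∀ x l, P1 true x l + P1 false x l = 1)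
    (hP2sum : ∀ x l, P2 true x l + P2 false x l = 1)
    (P : Bool → Bool → Fin 2 → Fin 2 → ℝ)
    (hP : ∀ a1 a2 x1 x2, P a1 a2 x1 x2 = ∑ l, ν l * (P1 a1 x1 l * P2 a2 x2 l))
    (h1 : P true true 1 0 = 0)
    (h2 : P true true 0 1 = 0)
    (h3 : P false false 1 1 = 0) :
    P true true 0 0 = 0 := by
  have nonneg : ∀ (a1 a2 : Bool) (x1 x2 : Fin 2) (l : Λ),
      0 ≤ ν l * (P1 a1 x1 l * P2 a2 x2 l) := fun a1 a2 x1 x2 l =>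
    mul_nonneg (hν l) (mul_nonneg (hP1 _ _ _) (hP2 _ _ _))
  have zero_terms : ∀ (a1 a2 : Bool) (x1 x2 : Fin 2), P a1 a2 x1 x2 = 0 →
      ∀ l, ν l * (P1 a1 x1 l * P2 a2 x2 l) = 0 := by
    intro a1 a2 x1 x2 h l
    have := (Finset.sum_eq_zero_iff_of_nonneg
      (fun l _ => nonneg a1 a2 x1 x2 l)).mp ((hP a1 a2 x1 x2).symm.trans h)
    exact this l (Finset.mem_univ l)
  rw [hP]
  apply Finset.sum_eq_zero
  intro l _
  rcases eq_or_lt_of_le (hν l) with hl | hl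
  · rw [← hl, zero_mul]
  have t1 := zero_terms true true 1 0 h1 l
  have t2 := zero_terms true true 0 1 h2 l
  have t3 := zero_terms false false 1 1 h3 l
  rw [mul_eq_zero] at t1 t2 t3
  have hl' : ν l ≠ 0 := ne_of_gt hl
  replace t1 := t1.resolve_left hl'
  replace t2 := t2.resolve_left hl'
  replace t3 := t3.resolve_left hl'
  rw [mul_eq_zero] at t1 t2 t3
  rcases t3 with h3' | h3'
  · -- P1 false 1 l = 0, so P1 true 1 l = 1
    have h11 : P1 true 1 l = 1 := by have := hP1sum 1 l; linarith
    have : P2 true 0 l = 0 := by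
      rcases t1 with h | h
      · rw [h11] at h; linarith
      · exact h
    rw [this, mul_zero, mul_zero]
  · have h21 : P2 true 1 l = 1 := by have := hP2sum 1 l; linarith
    have : P1 true 0 l = 0 := by
      rcases t2 with h | h
      · exact h
      · rw [h21] at h; linarith
    rw [this, zero_mul, mul_zero]
end
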